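/- For all positive integers n1, n2, the number of NAC-colourings of the complete bipartite graph K_{n1,n2} divided by 2 satisfies nac(K_{n1,n2}) = 2^{n1+n2−2} − 1. -/
import Mathlib


open scoped Classical

namespace NAC

variable {V : Type*}

/-- Number of edges of `G` in the list `l` whose colour under `c` is `b`. -/
noncomputable def cCount (G : SimpleGraph V) (c : G.edgeSet → Bool) (b : Bool)
    (l : List (Sym2 V)) : ℕ :=
  (l.filter fun e => decide (∃ h : e ∈ G.edgeSet, c ⟨e, h⟩ = b)).length

/-- `c` is a NAC-colouring of `G`: it is surjective (both colours are used) and no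
cycle of `G` contains exactly one edge of either colour. -/
def IsNAC (G : SimpleGraph V) (c : G.edgeSet → Bool) : Prop :=
  Function.Surjective c ∧
  ∀ ⦃u : V⦄ (w : G.Walk u u), w.IsCycle →
    cCount G c true w.edges ≠ 1 ∧ cCount G c false w.edges ≠ 1

/-- The number of NAC-colourings of `G`, divided by two. -/
noncomputable def nacNum (G : SimpleGraph V) : ℕ :=
  {c : G.edgeSet → Bool | IsNAC G c}.ncard / 2

end NAC
open Sum SimpleGraph

namespace NAC

open Sum SimpleGraph

variable {A B : Type*}

lemma cCount_nil (G : SimpleGraph V) (c : G.edgeSet → Bool) (b : Bool) :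
    cCount G c b [] = 0 := rfl

lemma cCount_cons (G : SimpleGraph V) (c : G.edgeSet → Bool) (b : Bool)
    {e : Sym2 V} (he : e ∈ G.edgeSet) (l : List (Sym2 V)) :
    cCount G c b (e :: l) = (if c ⟨e, he⟩ = b then 1 else 0) + cCount G c b l := by
  have hiff : (∃ h : e ∈ G.edgeSet, c ⟨e, h⟩ = b) ↔ c ⟨e, he⟩ = b :=
    ⟨fun ⟨_, hh⟩ => hh, fun hh => ⟨he, hh⟩⟩
  simp only [cCount, List.filter_cons, hiff]
  by_cases h : c ⟨e, he⟩ = b <;> simp [h, Nat.add_comm]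

lemma cCount_congr {G : SimpleGraph V} {c c' : G.edgeSet → Bool} {b b' : Bool}
    (h : ∀ e : G.edgeSet, c e = b ↔ c' e = b') (l : List (Sym2 V)) :
    cCount G c b l = cCount G c' b' l := by
  unfold cCount
  congr 1
  apply List.filter_congr
  intro e _
  simp only [decide_eq_decide]
  exact ⟨fun ⟨he, hh⟩ => ⟨he, (h ⟨e, he⟩).1 hh⟩, fun ⟨he, hh⟩ => ⟨he, (h ⟨e, he⟩).2 hh⟩⟩

variable {A B : Type*}

private def colFun (p : A ⊕ B → Bool) : Sym2 (A ⊕ B) → Bool :=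
  Sym2.lift ⟨fun x y => xor (p x) (p y), fun x y => by simp [Bool.xor_comm]⟩

noncomputable def colP (p : A ⊕ B → Bool) :
    (completeBipartiteGraph A B).edgeSet → Bool :=
  fun e => colFun p e.1

lemma colP_mk (p : A ⊕ B → Bool) {x y : A ⊕ B}
    (h : s(x,y) ∈ (completeBipartiteGraph A B).edgeSet) :
    colP p ⟨s(x,y), h⟩ = xor (p x) (p y) := rfl

lemma mem_edge (a : A) (b : B) :
    s(Sum.inl a, Sum.inr b) ∈ (completeBipartiteGraph A B).edgeSet := by
  simp [SimpleGraph.mem_edgeSet]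

lemma edge_form (e : (completeBipartiteGraph A B).edgeSet) :
    ∃ a b, e.1 = s(Sum.inl a, Sum.inr b) := by
  obtain ⟨e, he⟩ := e
  induction e with
  | _ x y =>
    rw [SimpleGraph.mem_edgeSet] at he
    rcases x with a | b <;> rcases y with a' | b' <;> simp_all [Sym2.eq_swap]

lemma even_cCount (p : A ⊕ B → Bool) :
    ∀ {x y : A ⊕ B} (w : (completeBipartiteGraph A B).Walk x y),
      (Even (cCount (completeBipartiteGraph A B) (colP p) true w.edges) ↔ p x = p y)
  | _, _, Walk.nil => by simp [cCount_nil]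
  | x, y, Walk.cons (v := z) h w => by
      have ih := even_cCount p w
      have he : s(x, z) ∈ (completeBipartiteGraph A B).edgeSet := h
      rw [Walk.edges_cons, cCount_cons _ _ _ he, colP_mk]
      cases hx : p x <;> cases hz : p z <;> cases hy : p y <;>
        simp_all [Nat.even_add]

/-- the "side" potential -/
def q10 : A ⊕ B → Bool := Sum.elim (fun _ => true) (fun _ => false)

lemma colP_neg (p : A ⊕ B → Bool) (e : (completeBipartiteGraph A B).edgeSet) :
    colP p e = false ↔ colP (fun v => xor (p v) (q10 v)) e = true := by
  obtain ⟨a, b, hab⟩ := edge_form e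
  have he : e = ⟨s(Sum.inl a, Sum.inr b), hab ▸ e.2⟩ := Subtype.ext hab
  rw [he, colP_mk, colP_mk]
  cases p (Sum.inl a) <;> cases p (Sum.inr b) <;> simp [q10]

lemma colP_ne_one (p : A ⊕ B → Bool) {u : A ⊕ B}
    (w : (completeBipartiteGraph A B).Walk u u) :
    cCount (completeBipartiteGraph A B) (colP p) true w.edges ≠ 1 ∧
    cCount (completeBipartiteGraph A B) (colP p) false w.edges ≠ 1 := by
  constructor
  · have h := (even_cCount p w).2 rfl
    intro h1; rw [h1] at h; simp at h
  · have h2 := cCount_congr (c' := colP (fun v => xor (p v) (q10 v))) (b := false) (b' := true)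
      (fun e => colP_neg p e) w.edges
    have h := (even_cCount (fun v => xor (p v) (q10 v)) w).2 rfl
    intro h1; rw [h1] at h2; rw [← h2] at h; simp at h

lemma isNAC_colP (p : A ⊕ B → Bool) (hs : Function.Surjective (colP p)) :
    IsNAC (completeBipartiteGraph A B) (colP p) :=
  ⟨hs, fun _ w _ => colP_ne_one p w⟩

end NAC

namespace NAC
variable {A B : Type*}

lemma key_ident (a0 : A) (b0 : B) {c : (completeBipartiteGraph A B).edgeSet → Bool}
    (hc : IsNAC (completeBipartiteGraph A B) c) (a : A) (b : B) :
    c ⟨s(inl a, inr b), mem_edge a b⟩ =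
      xor (c ⟨s(inl a, inr b0), mem_edge a b0⟩)
        (xor (c ⟨s(inl a0, inr b), mem_edge a0 b⟩) (c ⟨s(inl a0, inr b0), mem_edge a0 b0⟩)) := by
  by_cases ha : a = a0
  · subst ha
    cases c ⟨s(inl a, inr b), mem_edge a b⟩ <;> cases c ⟨s(inl a, inr b0), mem_edge a b0⟩ <;> simp
  by_cases hb : b = b0
  · subst hb
    cases c ⟨s(inl a, inr b), mem_edge a b⟩ <;> cases c ⟨s(inl a0, inr b), mem_edge a0 b⟩ <;> simp
  -- build the 4-cycle
  have h1 : (completeBipartiteGraph A B).Adj (inl a0) (inr b0) := by simp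
  have h2 : (completeBipartiteGraph A B).Adj (inr b0) (inl a) := by simp
  have h3 : (completeBipartiteGraph A B).Adj (inl a) (inr b) := by simp
  have h4 : (completeBipartiteGraph A B).Adj (inr b) (inl a0) := by simp
  set w : (completeBipartiteGraph A B).Walk (inl a0) (inl a0) :=
    .cons h1 (.cons h2 (.cons h3 (.cons h4 .nil))) with hw
  have hcyc : w.IsCycle := by
    rw [SimpleGraph.Walk.isCycle_def]
    refine ⟨?_, by simp [hw], ?_⟩
    · rw [SimpleGraph.Walk.isTrail_def]
      simp [hw, ha, hb, Sym2.eq_swap, Ne.symm ha, Ne.symm hb]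
    · simp [hw, ha, hb, Ne.symm ha, Ne.symm hb]
  obtain ⟨ht, hf⟩ := hc.2 w hcyc
  have hedges : w.edges = [s(inl a0, inr b0), s(inr b0, inl a), s(inl a, inr b), s(inr b, inl a0)] := by
    simp [hw]
  have he1 : s(inl a0, inr b0) ∈ (completeBipartiteGraph A B).edgeSet := h1
  have he2 : s(inr b0, inl a) ∈ (completeBipartiteGraph A B).edgeSet := h2
  have he3 : s(inl a, inr b) ∈ (completeBipartiteGraph A B).edgeSet := h3
  have he4 : s(inr b, inl a0) ∈ (completeBipartiteGraph A B).edgeSet := h4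
  have hs2 : (⟨s(inr b0, inl a), he2⟩ : (completeBipartiteGraph A B).edgeSet)
      = ⟨s(inl a, inr b0), mem_edge a b0⟩ := Subtype.ext Sym2.eq_swap
  have hs4 : (⟨s(inr b, inl a0), he4⟩ : (completeBipartiteGraph A B).edgeSet)
      = ⟨s(inl a0, inr b), mem_edge a0 b⟩ := Subtype.ext Sym2.eq_swap
  rw [hedges, cCount_cons _ _ _ he1, cCount_cons _ _ _ he2, cCount_cons _ _ _ he3,
    cCount_cons _ _ _ he4, cCount_nil, hs2, hs4] at ht hf
  have hee1 : (⟨s(inl a0, inr b0), he1⟩ : (completeBipartiteGraph A B).edgeSet)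
      = ⟨s(inl a0, inr b0), mem_edge a0 b0⟩ := rfl
  have hee3 : (⟨s(inl a, inr b), he3⟩ : (completeBipartiteGraph A B).edgeSet)
      = ⟨s(inl a, inr b), mem_edge a b⟩ := rfl
  rw [hee1, hee3] at ht hf
  cases hx1 : c ⟨s(inl a, inr b), mem_edge a b⟩ <;> cases hx2 : c ⟨s(inl a, inr b0), mem_edge a b0⟩ <;>
    cases hx3 : c ⟨s(inl a0, inr b), mem_edge a0 b⟩ <;> cases hx4 : c ⟨s(inl a0, inr b0), mem_edge a0 b0⟩ <;>
    simp_all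

end NAC

namespace NAC
variable {A B : Type*}

lemma colP_val (p : A ⊕ B → Bool) (e : (completeBipartiteGraph A B).edgeSet)
    {a : A} {b : B} (hab : e.1 = s(Sum.inl a, Sum.inr b)) :
    colP p e = xor (p (Sum.inl a)) (p (Sum.inr b)) := by
  show colFun p e.1 = _
  rw [hab]; rfl

lemma exists_colP (a0 : A) (b0 : B) {c : (completeBipartiteGraph A B).edgeSet → Bool}
    (hc : IsNAC (completeBipartiteGraph A B) c) :
    ∃ p : A ⊕ B → Bool, p (inr b0) = false ∧ c = colP p := by
  refine ⟨Sum.elim (fun a => c ⟨s(inl a, inr b0), mem_edge a b0⟩)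
    (fun b => xor (c ⟨s(inl a0, inr b), mem_edge a0 b⟩) (c ⟨s(inl a0, inr b0), mem_edge a0 b0⟩)),
    by simp, ?_⟩
  funext e
  obtain ⟨a, b, hab⟩ := edge_form e
  have he : e = ⟨s(inl a, inr b), hab ▸ e.2⟩ := Subtype.ext hab
  have he' : (⟨s(inl a, inr b), hab ▸ e.2⟩ : (completeBipartiteGraph A B).edgeSet)
      = ⟨s(inl a, inr b), mem_edge a b⟩ := rfl
  rw [he, colP_mk, he', key_ident a0 b0 hc a b]
  simp

lemma colP_inj (a0 : A) (b0 : B) {p q : A ⊕ B → Bool} (hp : p (inr b0) = false)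
    (hq : q (inr b0) = false) (h : colP p = colP q) : p = q := by
  have key : ∀ a b, xor (p (inl a)) (p (inr b)) = xor (q (inl a)) (q (inr b)) := fun a b => by
    have := congrFun h ⟨s(inl a, inr b), mem_edge a b⟩
    rwa [colP_mk, colP_mk] at this
  have hA : ∀ a, p (inl a) = q (inl a) := fun a => by
    have := key a b0; rw [hp, hq] at this; simpa using this
  funext v
  rcases v with a | b
  · exact hA a
  · have h1 := key a0 b
    rw [hA a0] at h1
    revert h1
    cases p (inr b) <;> cases q (inr b) <;> cases q (inl a0) <;> simp

lemma surj_iff (p : A ⊕ B → Bool) :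
    Function.Surjective (colP p) ↔
      (∃ a b, p (inl a) ≠ p (inr b)) ∧ (∃ a b, p (inl a) = p (inr b)) := by
  constructor
  · intro h
    obtain ⟨e, het⟩ := h true
    obtain ⟨f, hff⟩ := h false
    obtain ⟨a, b, hab⟩ := edge_form e
    obtain ⟨a', b', hab'⟩ := edge_form f
    rw [colP_val p e hab] at het
    rw [colP_val p f hab'] at hff
    constructor
    · exact ⟨a, b, by revert het; cases p (inl a) <;> cases p (inr b) <;> simp⟩
    · exact ⟨a', b', by revert hff; cases p (inl a') <;> cases p (inr b') <;> simp⟩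
  · rintro ⟨⟨a, b, hne⟩, ⟨a', b', heq⟩⟩ bo
    cases bo
    · exact ⟨⟨s(inl a', inr b'), mem_edge a' b'⟩, by
        rw [colP_mk, heq]; cases p (inr b') <;> simp⟩
    · exact ⟨⟨s(inl a, inr b), mem_edge a b⟩, by
        rw [colP_mk]; revert hne; cases p (inl a) <;> cases p (inr b) <;> simp⟩

/-- constant false potential -/
def cF : A ⊕ B → Bool := fun _ => false

lemma mem_P0_iff (a0 : A) (b0 : B) (p : A ⊕ B → Bool) :
    (p (inr b0) = false ∧ Function.Surjective (colP p)) ↔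
      (p (inr b0) = false ∧ p ≠ cF ∧ p ≠ (q10 : A ⊕ B → Bool)) := by
  constructor
  · rintro ⟨hp, hs⟩
    obtain ⟨⟨a, b, hne⟩, ⟨a', b', heq⟩⟩ := (surj_iff p).1 hs
    refine ⟨hp, ?_, ?_⟩
    · rintro rfl; exact hne (by simp [cF])
    · rintro rfl; simp [q10] at heq
  · rintro ⟨hp, h1, h2⟩
    refine ⟨hp, (surj_iff p).2 ⟨?_, ?_⟩⟩
    · by_contra hall
      push_neg at hall
      apply h1
      have hA : ∀ a, p (inl a) = false := fun a => (hall a b0).trans hp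
      have hB : ∀ b, p (inr b) = false := fun b => (hall a0 b).symm.trans (hA a0)
      funext v; rcases v with a | b
      · exact hA a
      · exact hB b
    · by_contra hall
      push_neg at hall
      apply h2
      have hA : ∀ a, p (inl a) = true := fun a => by
        have := hall a b0; rw [hp] at this; revert this; cases p (inl a) <;> simp
      have hB : ∀ b, p (inr b) = false := fun b => by
        have := hall a0 b; rw [hA a0] at this; revert this; cases p (inr b) <;> simp
      funext v; rcases v with a | b
      · simpa [q10] using hA a
      · simpa [q10] using hB b

lemma S_eq (a0 : A) (b0 : B) :
    {c : (completeBipartiteGraph A B).edgeSet → Bool | IsNAC (completeBipartiteGraph A B) c}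
      = colP '' {p : A ⊕ B → Bool | p (inr b0) = false ∧ Function.Surjective (colP p)} := by
  ext c
  constructor
  · intro hc
    obtain ⟨p, hp0, hcp⟩ := exists_colP a0 b0 hc
    exact ⟨p, ⟨hp0, hcp ▸ hc.1⟩, hcp.symm⟩
  · rintro ⟨p, ⟨hp0, hs⟩, rfl⟩
    exact isNAC_colP p hs

end NAC

namespace NAC

noncomputable def funAtEquiv {V : Type*} [DecidableEq V] (x0 : V) :
    {p : V → Bool // p x0 = false} ≃ ({v : V // v ≠ x0} → Bool) where
  toFun p v := p.1 v.1
  invFun g := ⟨fun v => if h : v = x0 then false else g ⟨v, h⟩, by simp⟩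
  left_inv p := by
    apply Subtype.ext
    funext v
    by_cases h : v = x0
    · subst h; simp [p.2]
    · simp [h]
  right_inv g := by
    funext v
    simp [v.2]

lemma ncard_base {V : Type*} [Fintype V] [DecidableEq V] (x0 : V) :
    {p : V → Bool | p x0 = false}.ncard = 2 ^ (Fintype.card V - 1) := by
  rw [← Nat.card_coe_set_eq]
  have h1 : Nat.card {p : V → Bool // p x0 = false} = 2 ^ (Fintype.card V - 1) := by
    rw [Nat.card_congr (funAtEquiv x0), Nat.card_fun]
    congr 1
    · simp [Nat.card_eq_fintype_card]
    · rw [Nat.card_eq_fintype_card, Fintype.card_subtype_compl, Fintype.card_subtype_eq]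
  exact h1

end NAC

open NAC in
/-- `nac(K_{n1,n2}) = 2^(n1+n2-2) - 1` for positive `n1, n2`; equivalently `K_{n1,n2}`
has exactly `2^(n1+n2-1) - 2` NAC-colourings. -/
theorem statement13 (n1 n2 : ℕ) (h1 : 1 ≤ n1) (h2 : 1 ≤ n2) :
    nacNum (completeBipartiteGraph (Fin n1) (Fin n2)) = 2 ^ (n1 + n2 - 2) - 1 := by
  have a0 : Fin n1 := ⟨0, h1⟩
  have b0 : Fin n2 := ⟨0, h2⟩
  rw [nacNum, S_eq a0 b0]
  have hinj : Set.InjOn colP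
      {p : Fin n1 ⊕ Fin n2 → Bool | p (Sum.inr b0) = false ∧ Function.Surjective (colP p)} :=
    fun p hp q hq h => colP_inj a0 b0 hp.1 hq.1 h
  rw [Set.ncard_image_of_injOn hinj]
  have hset : {p : Fin n1 ⊕ Fin n2 → Bool | p (Sum.inr b0) = false ∧ Function.Surjective (colP p)}
      = {p : Fin n1 ⊕ Fin n2 → Bool | p (Sum.inr b0) = false} \ {cF, q10} := by
    ext p
    rw [Set.mem_setOf_eq, mem_P0_iff a0 b0]
    simp only [Set.mem_diff, Set.mem_setOf_eq, Set.mem_insert_iff, Set.mem_singleton_iff]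
    tauto
  rw [hset]
  have hsub : ({cF, q10} : Set (Fin n1 ⊕ Fin n2 → Bool))
      ⊆ {p : Fin n1 ⊕ Fin n2 → Bool | p (Sum.inr b0) = false} := by
    rintro p (rfl | rfl)
    · rfl
    · rfl
  have hne : (cF : Fin n1 ⊕ Fin n2 → Bool) ≠ q10 := by
    intro h
    have := congrFun h (Sum.inl a0)
    simp [cF, q10] at this
  rw [Set.ncard_diff hsub, Set.ncard_pair hne, ncard_base]
  have hcard : Fintype.card (Fin n1 ⊕ Fin n2) = n1 + n2 := by simp
  rw [hcard]
  -- arithmetic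
  have hk : n1 + n2 - 1 = (n1 + n2 - 2) + 1 := by omega
  rw [hk, pow_succ]
  have hm : 1 ≤ 2 ^ (n1 + n2 - 2) := Nat.one_le_two_pow
  omega
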